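/- Let Ω ⊂ ℝ^d be a bounded set and let μ_1,…,μ_K ∈ Ω be centers with fill distance h = sup_{x∈Ω} min_{1≤k≤K} ‖x−μ_k‖ > 0 and separation radius q = (1/2) min_{i≠j} ‖μ_i−μ_j‖ satisfying h ≤ ρ q for a constant ρ ≥ 1. Let the weights satisfy 0 < w₋ ≤ w_k ≤ w₊ and let Σ_k be symmetric positive definite d×d matrices with c_Σ h² I ⪯ Σ_k ⪯ C_Σ h² I for constants 0 < c_Σ ≤ C_Σ. If f : ℝ^d → ℝ is Lipschitz on Ω with constant L (as holds, via Sobolev embedding, when f ∈ H^s with s > 1 + d/2), then there exists a constant C₁ depending only on d, ρ, c_Σ, C_Σ, w₋, w₊ such that sup_{x∈Ω} |f(x) − Σ_{k=1}^K ψ_k(x) f(μ_k)| ≤ C₁ L h. -/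

import Mathlib

/-!
Since the Shepard weights form a partition of unity, the error at `x` is at most
`L ∑ₖ ψₖ(x) ‖x - μₖ‖`. Comparing the covariances with `h² I` bounds every Gaussian above by
`exp (-‖x - μₖ‖² / (2 C_Σ h²))`, and bounds the Gaussian of the centre nearest to `x` (at distance
at most `h`) below by `exp (-1 / (2 c_Σ))`, so the denominator stays away from zero. Sorting the
centres into shells `n h ≤ ‖x - μₖ‖ < (n + 1) h`, a volume-packing argument with the disjoint
balls `B(μₖ, q)` and `h ≤ ρ q` puts at most `((ρ + 1)(n + 1))^d` centres in the `n`-th shell, and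
the resulting series `∑ₙ (n + 1)^(d+1) exp (-n / (2 C_Σ))` converges.
-/

/-- The anisotropic Gaussian basis function
`φₖ(x) = exp(−(1/2)(x−μₖ)ᵀ Σₖ⁻¹ (x−μₖ))`. -/
noncomputable def gaussBasis {d K : ℕ} (S : Fin K → Matrix (Fin d) (Fin d) ℝ)
    (μ : Fin K → EuclideanSpace ℝ (Fin d)) (k : Fin K)
    (x : EuclideanSpace ℝ (Fin d)) : ℝ :=
  Real.exp (-(1 / 2 : ℝ) * ∑ i, ∑ j, (x i - μ k i) * (S k)⁻¹ i j * (x j - μ k j))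

/-- The normalized Shepard weight `ψₖ(x) = wₖ φₖ(x) / ∑ⱼ wⱼ φⱼ(x)`. -/
noncomputable def shepardWeight {d K : ℕ} (S : Fin K → Matrix (Fin d) (Fin d) ℝ)
    (μ : Fin K → EuclideanSpace ℝ (Fin d)) (w : Fin K → ℝ) (k : Fin K)
    (x : EuclideanSpace ℝ (Fin d)) : ℝ :=
  w k * gaussBasis S μ k x / ∑ j, w j * gaussBasis S μ j x

open Real Finset Matrix Metric MeasureTheory Module

namespace Matrix

variable {n : Type*} [Fintype n] {S : Matrix n n ℝ}

lemma IsHermitian.dotProduct_mulVec_comm (hS : S.IsHermitian) (u v : n → ℝ) :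
    u ⬝ᵥ (S *ᵥ v) = v ⬝ᵥ (S *ᵥ u) := by
  rw [dotProduct_mulVec, ← mulVec_transpose, ← conjTranspose_eq_transpose_of_trivial, hS.eq,
    dotProduct_comm]

lemma PosSemidef.real_dotProduct_mulVec_nonneg (hS : S.PosSemidef) (v : n → ℝ) :
    0 ≤ v ⬝ᵥ (S *ᵥ v) := by
  simpa using hS.dotProduct_mulVec_nonneg v

variable [DecidableEq n]

lemma PosSemidef.smul_dotProduct_le_of_sub (a : ℝ) (h : (S - a • 1).PosSemidef) (v : n → ℝ) :
    a * (v ⬝ᵥ v) ≤ v ⬝ᵥ (S *ᵥ v) := by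
  have := h.real_dotProduct_mulVec_nonneg v
  rw [sub_mulVec, dotProduct_sub, smul_mulVec, one_mulVec, dotProduct_smul, smul_eq_mul] at this
  linarith

lemma PosSemidef.dotProduct_le_smul_of_sub (b : ℝ) (h : (b • 1 - S).PosSemidef) (v : n → ℝ) :
    v ⬝ᵥ (S *ᵥ v) ≤ b * (v ⬝ᵥ v) := by
  have := h.real_dotProduct_mulVec_nonneg v
  rw [sub_mulVec, dotProduct_sub, smul_mulVec, one_mulVec, dotProduct_smul, smul_eq_mul] at this
  linarith

lemma PosDef.mulVec_inv_mulVec (hS : S.PosDef) (v : n → ℝ) : S *ᵥ (S⁻¹ *ᵥ v) = v := by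
  rw [mulVec_mulVec, mul_nonsing_inv _ ((isUnit_iff_isUnit_det S).mp hS.isUnit), one_mulVec]

lemma PosDef.dotProduct_inv_mulVec_le (hS : S.PosDef) {a : ℝ} (ha : 0 < a)
    (h : (S - a • 1).PosSemidef) (v : n → ℝ) :
    v ⬝ᵥ (S⁻¹ *ᵥ v) ≤ (v ⬝ᵥ v) / a := by
  -- with `u = S⁻¹ v`, `a ‖u‖² ≤ u ⬝ᵥ S u = u ⬝ᵥ v`, and `0 ≤ ‖a u - v‖²` gives `a (u ⬝ᵥ v) ≤ ‖v‖²`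
  set u := S⁻¹ *ᵥ v
  have hSu : S *ᵥ u = v := hS.mulVec_inv_mulVec v
  have hlow := h.smul_dotProduct_le_of_sub a u
  have hsq : 0 ≤ (a • u - v) ⬝ᵥ (a • u - v) := by
    simpa using dotProduct_star_self_nonneg (a • u - v)
  rw [hSu] at hlow
  simp only [sub_dotProduct, dotProduct_sub, smul_dotProduct, dotProduct_smul, smul_eq_mul,
    dotProduct_comm v u] at hsq
  rw [dotProduct_comm, le_div_iff₀ ha]
  nlinarith

lemma PosDef.div_le_dotProduct_inv_mulVec (hS : S.PosDef) {b : ℝ} (hb : 0 < b)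
    (h : (b • 1 - S).PosSemidef) (v : n → ℝ) :
    (v ⬝ᵥ v) / b ≤ v ⬝ᵥ (S⁻¹ *ᵥ v) := by
  -- with `u = S⁻¹ v`, expand `0 ≤ (b u - v) ⬝ᵥ S (b u - v)` and bound `v ⬝ᵥ S v ≤ b ‖v‖²`
  set u := S⁻¹ *ᵥ v
  have hSu : S *ᵥ u = v := hS.mulVec_inv_mulVec v
  have hup := h.dotProduct_le_smul_of_sub b v
  have hform := hS.posSemidef.real_dotProduct_mulVec_nonneg (b • u - v)
  have hsymm := hS.isHermitian.dotProduct_mulVec_comm u v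
  simp only [mulVec_sub, mulVec_smul, hSu, sub_dotProduct, dotProduct_sub, smul_dotProduct,
    dotProduct_smul, smul_eq_mul] at hform hsymm
  rw [div_le_iff₀ hb, dotProduct_comm v u]
  nlinarith

end Matrix

lemma EuclideanSpace.dotProduct_ofLp_self {n : Type*} [Fintype n] (y : EuclideanSpace ℝ n) :
    y.ofLp ⬝ᵥ y.ofLp = ‖y‖ ^ 2 := by
  rw [EuclideanSpace.real_norm_sq_eq, dotProduct]
  simp only [sq]

lemma card_mul_pow_finrank_le_of_pairwise_dist {E ι : Type*} [NormedAddCommGroup E]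
    [NormedSpace ℝ E] [FiniteDimensional ℝ E] {μ : ι → E} {q R : ℝ} (hq : 0 < q) (hR : 0 ≤ R)
    (hsep : Pairwise fun i j => 2 * q ≤ dist (μ i) (μ j)) (x : E) (s : Finset ι)
    (hs : ∀ k ∈ s, dist (μ k) x ≤ R) :
    (#s : ℝ) * q ^ finrank ℝ E ≤ (R + q) ^ finrank ℝ E := by
  borelize E
  set ν : Measure E := Measure.addHaar
  have hdisj : (s : Set ι).PairwiseDisjoint fun k => ball (μ k) q := fun i _ j _ hij =>
    ball_disjoint_ball (by linarith [hsep hij])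
  have hsub : (⋃ k ∈ s, ball (μ k) q) ⊆ ball x (R + q) := by
    simp only [Set.iUnion_subset_iff]
    intro k hk
    exact ball_subset_ball' (by linarith [hs k hk])
  have hvol : ∑ k ∈ s, ν (ball (μ k) q) ≤ ν (ball x (R + q)) := by
    rw [← measure_biUnion_finset hdisj fun k _ => measurableSet_ball]
    exact measure_mono hsub
  simp only [Measure.addHaar_ball_of_pos ν _ hq,
    Measure.addHaar_ball_of_pos ν _ (by linarith : 0 < R + q), sum_const, nsmul_eq_mul,
    ← mul_assoc] at hvol
  have hball : ν (ball 0 1) ≠ 0 := (measure_ball_pos ν 0 one_pos).ne'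
  rw [ENNReal.mul_le_mul_iff_left hball measure_ball_lt_top.ne, ← ENNReal.ofReal_natCast,
    ← ENNReal.ofReal_mul (by positivity), ENNReal.ofReal_le_ofReal_iff (by positivity)] at hvol
  exact hvol

lemma sum_le_tsum_of_card_fiber_le {ι : Type*} [Fintype ι] (N : ι → ℕ) {G : ι → ℝ}
    {g c : ℕ → ℝ} (hG : ∀ k, G k ≤ g (N k)) (hg : ∀ n, 0 ≤ g n)
    (hc : ∀ n, (#{k | N k = n} : ℝ) ≤ c n) (hs : Summable fun n => c n * g n) :
    ∑ k, G k ≤ ∑' n, c n * g n := by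
  have hcg : ∀ n, 0 ≤ c n * g n := fun n => mul_nonneg ((Nat.cast_nonneg _).trans (hc n)) (hg n)
  calc ∑ k, G k ≤ ∑ k, g (N k) := sum_le_sum fun k _ => hG k
    _ = ∑ n ∈ univ.image N, (#{k | N k = n} : ℝ) * g n := by
      rw [sum_comp]
      simp only [nsmul_eq_mul]
    _ ≤ ∑ n ∈ univ.image N, c n * g n :=
      sum_le_sum fun n _ => mul_le_mul_of_nonneg_right (hc n) (hg n)
    _ ≤ ∑' n, c n * g n := hs.sum_le_tsum _ fun n _ => hcg n

noncomputable def gaussShellSum (n : ℕ) (b : ℝ) : ℝ :=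
  ∑' m : ℕ, ((m : ℝ) + 1) ^ (n + 1) * exp (-(m / (2 * b)))

lemma summable_succ_pow_mul_exp_neg (n : ℕ) {b : ℝ} (hb : 0 < b) :
    Summable fun m : ℕ => ((m : ℝ) + 1) ^ (n + 1) * exp (-(m / (2 * b))) := by
  have hr : 0 < 1 / (2 * b) := by positivity
  have := ((summable_nat_add_iff 1).mpr (Real.summable_pow_mul_exp_neg_nat_mul (n + 1) hr)).mul_left
    (exp (1 / (2 * b)))
  refine this.congr fun m => ?_
  push_cast
  rw [mul_left_comm, ← exp_add]
  ring_nf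

lemma mul_exp_neg_sq_le_floor {r h b : ℝ} (hr : 0 ≤ r) (hh : 0 < h) (hb : 0 < b) :
    r * exp (-(r ^ 2 / (2 * (b * h ^ 2))))
      ≤ h * ((⌊r / h⌋₊ : ℝ) + 1) * exp (-(⌊r / h⌋₊ / (2 * b))) := by
  set N := ⌊r / h⌋₊
  have hNr : (N : ℝ) * h ≤ r := (le_div_iff₀ hh).mp (Nat.floor_le (by positivity))
  have hrN : r ≤ ((N : ℝ) + 1) * h := ((div_lt_iff₀ hh).mp (Nat.lt_floor_add_one _)).le
  have hN : (N : ℝ) ≤ (N : ℝ) ^ 2 := by exact_mod_cast Nat.le_self_pow two_ne_zero N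
  have hexp : (N : ℝ) / (2 * b) ≤ r ^ 2 / (2 * (b * h ^ 2)) := by
    rw [div_le_div_iff₀ (by positivity) (by positivity)]
    nlinarith [mul_le_mul_of_nonneg_right hN (sq_nonneg h),
      pow_le_pow_left₀ (by positivity) hNr 2]
  rw [mul_comm h]
  exact mul_le_mul hrN (exp_le_exp.mpr (neg_le_neg hexp)) (exp_pos _).le (by positivity)

section Shells

variable {E ι : Type*} [NormedAddCommGroup E] [NormedSpace ℝ E] [FiniteDimensional ℝ E]
  [Fintype ι] {μ : ι → E} {q h ρ : ℝ}

lemma card_floor_norm_sub_div_eq_le (hq : 0 < q) (hh : 0 < h) (hhq : h ≤ ρ * q)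
    (hsep : Pairwise fun i j => 2 * q ≤ dist (μ i) (μ j)) (x : E) (m : ℕ) :
    (#{k | ⌊‖x - μ k‖ / h⌋₊ = m} : ℝ) ≤ ((ρ + 1) * ((m : ℝ) + 1)) ^ finrank ℝ E := by
  have hpack := card_mul_pow_finrank_le_of_pairwise_dist hq (by positivity : 0 ≤ ((m : ℝ) + 1) * h)
    hsep x {k | ⌊‖x - μ k‖ / h⌋₊ = m} fun k hk => by
      simp only [mem_filter, mem_univ, true_and] at hk
      rw [dist_comm, dist_eq_norm, ← hk]
      exact ((div_lt_iff₀ hh).mp (Nat.lt_floor_add_one _)).le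
  have hball : ((m : ℝ) + 1) * h + q ≤ (ρ + 1) * ((m : ℝ) + 1) * q := by
    nlinarith [mul_le_mul_of_nonneg_left hhq (by positivity : (0 : ℝ) ≤ (m : ℝ) + 1)]
  have := hpack.trans (pow_le_pow_left₀ (by positivity) hball _)
  rw [mul_pow] at this
  exact le_of_mul_le_mul_right this (by positivity)

lemma sum_norm_sub_mul_exp_le {b : ℝ} (hq : 0 < q) (hh : 0 < h) (hhq : h ≤ ρ * q) (hb : 0 < b)
    (hsep : Pairwise fun i j => 2 * q ≤ dist (μ i) (μ j)) (x : E) :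
    ∑ k, ‖x - μ k‖ * exp (-(‖x - μ k‖ ^ 2 / (2 * (b * h ^ 2))))
      ≤ (ρ + 1) ^ finrank ℝ E * gaussShellSum (finrank ℝ E) b * h := by
  calc _ ≤ ∑' m : ℕ, ((ρ + 1) * ((m : ℝ) + 1)) ^ finrank ℝ E
          * (h * ((m : ℝ) + 1) * exp (-(m / (2 * b)))) :=
        sum_le_tsum_of_card_fiber_le (fun k => ⌊‖x - μ k‖ / h⌋₊)
          (fun k => mul_exp_neg_sq_le_floor (norm_nonneg _) hh hb) (fun m => by positivity)
          (card_floor_norm_sub_div_eq_le hq hh hhq hsep x)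
          (((summable_succ_pow_mul_exp_neg _ hb).mul_left ((ρ + 1) ^ finrank ℝ E * h)).congr
            fun m => by rw [mul_pow]; ring)
    _ = (ρ + 1) ^ finrank ℝ E * gaussShellSum (finrank ℝ E) b * h := by
      rw [gaussShellSum, ← tsum_mul_left, ← tsum_mul_right]
      congr 1 with m
      rw [mul_pow]
      ring

end Shells

lemma gaussBasis_pos {d K : ℕ} (S : Fin K → Matrix (Fin d) (Fin d) ℝ)
    (μ : Fin K → EuclideanSpace ℝ (Fin d)) (k : Fin K) (x : EuclideanSpace ℝ (Fin d)) :
    0 < gaussBasis S μ k x :=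
  exp_pos _

section Gaussian

variable {d K : ℕ} {S : Fin K → Matrix (Fin d) (Fin d) ℝ} {μ : Fin K → EuclideanSpace ℝ (Fin d)}
  {k : Fin K} {x : EuclideanSpace ℝ (Fin d)}

lemma gaussBasis_eq_exp_dotProduct :
    gaussBasis S μ k x =
      exp (-(1 / 2) * ((x - μ k).ofLp ⬝ᵥ ((S k)⁻¹ *ᵥ (x - μ k).ofLp))) := by
  simp only [gaussBasis, dotProduct, mulVec, mul_sum, WithLp.ofLp_sub, Pi.sub_apply]
  simp only [mul_assoc]

lemma gaussBasis_le_exp (hS : (S k).PosDef) {b : ℝ} (hb : 0 < b)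
    (h : (b • 1 - S k).PosSemidef) :
    gaussBasis S μ k x ≤ exp (-(‖x - μ k‖ ^ 2 / (2 * b))) := by
  have := hS.div_le_dotProduct_inv_mulVec hb h (x - μ k).ofLp
  rw [EuclideanSpace.dotProduct_ofLp_self] at this
  rw [gaussBasis_eq_exp_dotProduct, exp_le_exp, mul_comm 2, ← div_div]
  linarith

lemma exp_le_gaussBasis (hS : (S k).PosDef) {a : ℝ} (ha : 0 < a)
    (h : (S k - a • 1).PosSemidef) :
    exp (-(‖x - μ k‖ ^ 2 / (2 * a))) ≤ gaussBasis S μ k x := by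
  have := hS.dotProduct_inv_mulVec_le ha h (x - μ k).ofLp
  rw [EuclideanSpace.dotProduct_ofLp_self] at this
  rw [gaussBasis_eq_exp_dotProduct, exp_le_exp, mul_comm 2, ← div_div]
  linarith

lemma exp_le_gaussBasis_of_norm_le (hS : (S k).PosDef) {a h : ℝ} (ha : 0 < a) (hh : 0 < h)
    (hSa : (S k - (a * h ^ 2) • 1).PosSemidef) (hx : ‖x - μ k‖ ≤ h) :
    exp (-(1 / (2 * a))) ≤ gaussBasis S μ k x := by
  refine le_trans (exp_le_exp.mpr (neg_le_neg ?_)) (exp_le_gaussBasis hS (by positivity) hSa)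
  rw [div_le_div_iff₀ (by positivity) (by positivity)]
  nlinarith [pow_le_pow_left₀ (norm_nonneg _) hx 2]

end Gaussian

lemma abs_sub_sum_mul_le_sum_mul_abs {ι : Type*} (s : Finset ι) {p : ι → ℝ}
    (hp : ∀ k ∈ s, 0 ≤ p k) (hsum : ∑ k ∈ s, p k = 1) (a : ℝ) (b : ι → ℝ) :
    |a - ∑ k ∈ s, p k * b k| ≤ ∑ k ∈ s, p k * |a - b k| := by
  have hsplit : a - ∑ k ∈ s, p k * b k = ∑ k ∈ s, p k * (a - b k) := by
    simp only [mul_sub, sum_sub_distrib, ← sum_mul, hsum, one_mul]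
  rw [hsplit]
  refine (abs_sum_le_sum_abs _ _).trans_eq (sum_congr rfl fun k hk => ?_)
  rw [abs_mul, abs_of_nonneg (hp k hk)]

section Shepard

variable {d K : ℕ} {S : Fin K → Matrix (Fin d) (Fin d) ℝ} {μ : Fin K → EuclideanSpace ℝ (Fin d)}
  {w : Fin K → ℝ} {x : EuclideanSpace ℝ (Fin d)}

lemma shepardWeight_nonneg (hw : ∀ k, 0 ≤ w k) (k : Fin K) : 0 ≤ shepardWeight S μ w k x :=
  div_nonneg (mul_nonneg (hw k) (gaussBasis_pos ..).le)
    (sum_nonneg fun j _ => mul_nonneg (hw j) (gaussBasis_pos ..).le)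

lemma sum_shepardWeight (hD : ∑ j, w j * gaussBasis S μ j x ≠ 0) :
    ∑ k, shepardWeight S μ w k x = 1 := by
  simp only [shepardWeight, ← sum_div]
  exact div_self hD

lemma abs_sub_sum_shepardWeight_mul_le (hw : ∀ k, 0 ≤ w k)
    (hD : ∑ j, w j * gaussBasis S μ j x ≠ 0) (f : EuclideanSpace ℝ (Fin d) → ℝ) {L : ℝ}
    (hf : ∀ k, |f x - f (μ k)| ≤ L * ‖x - μ k‖) :
    |f x - ∑ k, shepardWeight S μ w k x * f (μ k)|
      ≤ L * ∑ k, shepardWeight S μ w k x * ‖x - μ k‖ := by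
  refine (abs_sub_sum_mul_le_sum_mul_abs _ (fun k _ => shepardWeight_nonneg hw k)
    (sum_shepardWeight hD) _ _).trans ?_
  rw [mul_sum]
  exact sum_le_sum fun k _ =>
    (mul_le_mul_of_nonneg_left (hf k) (shepardWeight_nonneg hw k)).trans_eq (by ring)

lemma sum_shepardWeight_mul_norm_le {whi D₀ b : ℝ} (hw : ∀ k, 0 ≤ w k) (hwhi : ∀ k, w k ≤ whi)
    (hD₀ : 0 < D₀) (hD : D₀ ≤ ∑ j, w j * gaussBasis S μ j x)
    (hφ : ∀ k, gaussBasis S μ k x ≤ exp (-(‖x - μ k‖ ^ 2 / (2 * b)))) :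
    ∑ k, shepardWeight S μ w k x * ‖x - μ k‖
      ≤ whi / D₀ * ∑ k, ‖x - μ k‖ * exp (-(‖x - μ k‖ ^ 2 / (2 * b))) := by
  rw [mul_sum]
  refine sum_le_sum fun k _ => ?_
  have hwφ : w k * gaussBasis S μ k x ≤ whi * exp (-(‖x - μ k‖ ^ 2 / (2 * b))) :=
    mul_le_mul (hwhi k) (hφ k) (gaussBasis_pos ..).le ((hw k).trans (hwhi k))
  have hψ : shepardWeight S μ w k x ≤ whi * exp (-(‖x - μ k‖ ^ 2 / (2 * b))) / D₀ :=
    div_le_div₀ (by nlinarith [(hw k).trans (hwhi k), exp_pos (-(‖x - μ k‖ ^ 2 / (2 * b)))])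
      hwφ hD₀ hD
  calc shepardWeight S μ w k x * ‖x - μ k‖
      ≤ whi * exp (-(‖x - μ k‖ ^ 2 / (2 * b))) / D₀ * ‖x - μ k‖ :=
        mul_le_mul_of_nonneg_right hψ (norm_nonneg _)
    _ = whi / D₀ * (‖x - μ k‖ * exp (-(‖x - μ k‖ ^ 2 / (2 * b)))) := by ring

lemma mul_exp_le_sum_mul_gaussBasis {wlo a h : ℝ} {k₀ : Fin K} (hw : ∀ k, 0 ≤ w k)
    (hwk₀ : wlo ≤ w k₀) (hS : (S k₀).PosDef) (ha : 0 < a) (hh : 0 < h)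
    (hSa : (S k₀ - (a * h ^ 2) • 1).PosSemidef) (hx : ‖x - μ k₀‖ ≤ h) :
    wlo * exp (-(1 / (2 * a))) ≤ ∑ j, w j * gaussBasis S μ j x :=
  (mul_le_mul hwk₀ (exp_le_gaussBasis_of_norm_le hS ha hh hSa hx) (exp_pos _).le (hw k₀)).trans
    (single_le_sum (fun j _ => mul_nonneg (hw j) (gaussBasis_pos S μ j x).le) (mem_univ k₀))

end Shepard

lemma exists_norm_sub_le_iSup_iInf {E ι : Type*} [SeminormedAddCommGroup E] [Finite ι]
    [Nonempty ι] {Ω : Set E} (hΩ : Bornology.IsBounded Ω) (μ : ι → E) {x : E} (hx : x ∈ Ω) :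
    ∃ k, ‖x - μ k‖ ≤ ⨆ y : Ω, ⨅ k, ‖(y : E) - μ k‖ := by
  obtain ⟨k, hk⟩ := exists_eq_ciInf_of_finite (f := fun k => ‖x - μ k‖)
  obtain ⟨k₁⟩ := ‹Nonempty ι›
  obtain ⟨R, hR⟩ := hΩ.subset_closedBall (μ k₁)
  have hbdd : BddAbove (Set.range fun y : Ω => ⨅ k, ‖(y : E) - μ k‖) := by
    refine ⟨R, Set.forall_mem_range.mpr fun y => ?_⟩
    refine (ciInf_le (Finite.bddBelow_range _) k₁).trans ?_
    simpa [dist_eq_norm] using hR y.2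
  exact ⟨k, hk ▸ le_ciSup hbdd ⟨x, hx⟩⟩

lemma pairwise_two_mul_le_dist_of_eq_iInf {E ι : Type*} [SeminormedAddCommGroup E] [Finite ι]
    {μ : ι → E} {q : ℝ} (hq : q = 1 / 2 * ⨅ p : {p : ι × ι // p.1 ≠ p.2}, ‖μ p.val.1 - μ p.val.2‖) :
    Pairwise fun i j => 2 * q ≤ dist (μ i) (μ j) := by
  intro i j hij
  rw [hq, dist_eq_norm]
  linarith [ciInf_le (Finite.bddBelow_range fun p : {p : ι × ι // p.1 ≠ p.2} =>
    ‖μ p.val.1 - μ p.val.2‖) ⟨(i, j), hij⟩]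

lemma nontrivial_of_half_iInf_norm_sub_pos {E ι : Type*} [SeminormedAddCommGroup E] {μ : ι → E}
    (hq : 0 < 1 / 2 * ⨅ p : {p : ι × ι // p.1 ≠ p.2}, ‖μ p.val.1 - μ p.val.2‖) :
    Nontrivial ι := by
  by_contra hι
  rw [not_nontrivial_iff_subsingleton] at hι
  have : IsEmpty {p : ι × ι // p.1 ≠ p.2} := ⟨fun p => p.2 (Subsingleton.elim _ _)⟩
  simp [Real.iInf_of_isEmpty] at hq

lemma nonneg_of_abs_sub_le_mul_norm {E : Type*} [SeminormedAddCommGroup E] {f : E → ℝ} {L : ℝ}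
    {a b : E} (hab : 0 < ‖a - b‖) (h : |f a - f b| ≤ L * ‖a - b‖) : 0 ≤ L :=
  nonneg_of_mul_nonneg_left ((abs_nonneg _).trans h) hab

theorem shepard_lipschitz_error_general
    (d : ℕ) (ρ cSig CSig wlo whi : ℝ)
    (hcSig : 0 < cSig) (hcC : cSig ≤ CSig)
    (hwlo : 0 < wlo) :
    ∃ C₁ : ℝ, ∀ (Ω : Set (EuclideanSpace ℝ (Fin d))), Bornology.IsBounded Ω →
      ∀ (K : ℕ) (μ : Fin K → EuclideanSpace ℝ (Fin d)) (h q : ℝ),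
      (∀ k, μ k ∈ Ω) →
      h = ⨆ x : Ω, ⨅ k, ‖(x : EuclideanSpace ℝ (Fin d)) - μ k‖ →
      0 < h →
      q = (1 / 2) * ⨅ p : {p : Fin K × Fin K // p.1 ≠ p.2}, ‖μ p.val.1 - μ p.val.2‖ →
      h ≤ ρ * q →
      ∀ (w : Fin K → ℝ) (S : Fin K → Matrix (Fin d) (Fin d) ℝ),
        (∀ k, wlo ≤ w k ∧ w k ≤ whi) →
        (∀ k, (S k).PosDef) →
        (∀ k, (S k - (cSig * h ^ 2) • 1).PosSemidef ∧
              ((CSig * h ^ 2) • 1 - S k).PosSemidef) →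
        ∀ (f : EuclideanSpace ℝ (Fin d) → ℝ) (L : ℝ),
          (∀ x ∈ Ω, ∀ y ∈ Ω, |f x - f y| ≤ L * ‖x - y‖) →
          ∀ x ∈ Ω, |f x - ∑ k, shepardWeight S μ w k x * f (μ k)| ≤ C₁ * L * h := by
  set D₀ := wlo * exp (-(1 / (2 * cSig)))
  refine ⟨whi / D₀ * ((ρ + 1) ^ d * gaussShellSum d CSig), ?_⟩
  intro Ω hΩ K μ h q hμΩ hh_def hh hq_def hhq w S hw hSpd hSsand f L hLip x hx
  have hw0 : ∀ k, 0 ≤ w k := fun k => hwlo.le.trans (hw k).1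
  have hCSig : 0 < CSig := hcSig.trans_le hcC
  have hq : 0 < q := by
    refine lt_of_le_of_ne ?_ fun hq0 => by rw [← hq0] at hhq; linarith
    rw [hq_def]
    exact mul_nonneg (by norm_num) (Real.iInf_nonneg fun _ => norm_nonneg _)
  have hsep := pairwise_two_mul_le_dist_of_eq_iInf hq_def
  have : Nontrivial (Fin K) := nontrivial_of_half_iInf_norm_sub_pos (hq_def ▸ hq)
  obtain ⟨i, j, hij⟩ := exists_pair_ne (Fin K)
  have hL : 0 ≤ L := nonneg_of_abs_sub_le_mul_norm
    (by simpa [← dist_eq_norm] using (mul_pos two_pos hq).trans_le (hsep hij))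
    (hLip _ (hμΩ i) _ (hμΩ j))
  obtain ⟨k₀, hk₀⟩ := exists_norm_sub_le_iSup_iInf hΩ μ hx
  have hD : D₀ ≤ ∑ j, w j * gaussBasis S μ j x :=
    mul_exp_le_sum_mul_gaussBasis hw0 (hw k₀).1 (hSpd k₀) hcSig hh (hSsand k₀).1 (hh_def ▸ hk₀)
  have hD₀ : 0 < D₀ := by positivity
  have hφ : ∀ k, gaussBasis S μ k x ≤ exp (-(‖x - μ k‖ ^ 2 / (2 * (CSig * h ^ 2)))) :=
    fun k => gaussBasis_le_exp (hSpd k) (by positivity) (hSsand k).2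
  have hshells := sum_norm_sub_mul_exp_le hq hh hhq hCSig hsep x
  rw [finrank_euclideanSpace_fin] at hshells
  have hwhi : 0 ≤ whi / D₀ := div_nonneg ((hw0 k₀).trans (hw k₀).2) hD₀.le
  calc |f x - ∑ k, shepardWeight S μ w k x * f (μ k)|
      ≤ L * ∑ k, shepardWeight S μ w k x * ‖x - μ k‖ :=
        abs_sub_sum_shepardWeight_mul_le hw0 (hD₀.trans_le hD).ne' f fun k => hLip x hx _ (hμΩ k)
    _ ≤ L * (whi / D₀ * ((ρ + 1) ^ d * gaussShellSum d CSig * h)) := by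
        gcongr
        exact (sum_shepardWeight_mul_norm_le hw0 (fun k => (hw k).2) hD₀ hD hφ).trans
          (by gcongr)
    _ = whi / D₀ * ((ρ + 1) ^ d * gaussShellSum d CSig) * L * h := by ring

/-- **first-order Shepard error for Lipschitz fields.** Under
quasi-uniformity, bounded weights and covariances comparable to `h²I`, for `f`
Lipschitz on `Ω` with constant `L`, the normalized Shepard approximant satisfies
`sup_{x∈Ω} |f(x) − ∑ₖ ψₖ(x) f(μₖ)| ≤ C₁ L h`, with `C₁` depending only on
`d, ρ, c_Σ, C_Σ, w₋, w₊`. -/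
theorem shepard_lipschitz_error
    (d : ℕ) (ρ cSig CSig wlo whi : ℝ)
    (hρ : 1 ≤ ρ) (hcSig : 0 < cSig) (hcC : cSig ≤ CSig)
    (hwlo : 0 < wlo) (hw : wlo ≤ whi) :
    ∃ C₁ : ℝ, ∀ (Ω : Set (EuclideanSpace ℝ (Fin d))), Bornology.IsBounded Ω →
      ∀ (K : ℕ) (μ : Fin K → EuclideanSpace ℝ (Fin d)) (h q : ℝ),
      (∀ k, μ k ∈ Ω) →
      h = ⨆ x : Ω, ⨅ k, ‖(x : EuclideanSpace ℝ (Fin d)) - μ k‖ →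
      0 < h →
      q = (1 / 2) * ⨅ p : {p : Fin K × Fin K // p.1 ≠ p.2}, ‖μ p.val.1 - μ p.val.2‖ →
      h ≤ ρ * q →
      ∀ (w : Fin K → ℝ) (S : Fin K → Matrix (Fin d) (Fin d) ℝ),
        (∀ k, wlo ≤ w k ∧ w k ≤ whi) →
        (∀ k, (S k).PosDef) →
        (∀ k, (S k - (cSig * h ^ 2) • 1).PosSemidef ∧
              ((CSig * h ^ 2) • 1 - S k).PosSemidef) →
        ∀ (f : EuclideanSpace ℝ (Fin d) → ℝ) (L : ℝ),
          (∀ x ∈ Ω, ∀ y ∈ Ω, |f x - f y| ≤ L * ‖x - y‖) →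
          ∀ x ∈ Ω, |f x - ∑ k, shepardWeight S μ w k x * f (μ k)| ≤ C₁ * L * h :=
  shepard_lipschitz_error_general d ρ cSig CSig wlo whi hcSig hcC hwlo
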